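/- For any ν ∈ int(T), ν_c ∈ C(ν), and r ∈ [R_ν]: ℋ((W^(ν'))_{ν'∈T∖{ν}}, PadR_r(W^(ν)_{r,:})) = σ^(ν,r)·Ĉ^(ν,r) and ℋ((W^(ν'))_{ν'∈T∖{ν_c}}, PadC_r(W^(ν_c)_{:,r})) = σ^(ν,r)·Ĉ^(ν,r), where PadR_r(Δᵀ) ∈ ℝ^{R_ν×R_{Pa(ν)}} denotes the matrix whose r'th row is Δᵀ and whose other rows are zero, and PadC_r(Δ) ∈ ℝ^{R_{ν_c}×R_ν} denotes the matrix whose r'th column is Δ and whose other columns are zero. -/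

import Mathlib

namespace HTF

/-- Rooted tree whose leaves are labeled by elements of `Fin N`. -/
inductive MTree (N : ℕ) : Type
  | leaf : Fin N → MTree N
  | node : List (MTree N) → MTree N

noncomputable instance {N : ℕ} : DecidableEq (MTree N) := fun _ _ => Classical.dec _

namespace MTree

variable {N : ℕ}

/-- The list of leaf labels of the tree. -/
def leafList : MTree N → List (Fin N)
  | .leaf i => [i]
  | .node ts => ts.attach.flatMap fun t => t.1.leafList
decreasing_by simp only [MTree.node.sizeOf_spec]; have := List.sizeOf_lt_of_mem t.2; omega

/-- The label of a node: set of leaf indices appearing in its subtree. -/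
def label (t : MTree N) : Finset (Fin N) := t.leafList.toFinset

/-- All nodes (subtrees) of the tree. -/
def nodes : MTree N → List (MTree N)
  | .leaf i => [.leaf i]
  | .node ts => .node ts :: ts.attach.flatMap fun t => t.1.nodes
decreasing_by simp only [MTree.node.sizeOf_spec]; have := List.sizeOf_lt_of_mem t.2; omega

/-- The children of a node. -/
def children : MTree N → List (MTree N)
  | .leaf _ => []
  | .node ts => ts

/-- Interior (non-leaf) node. -/
def IsInterior : MTree N → Prop
  | .leaf _ => False
  | .node _ => True

/-- Every non-leaf node has at least one child. -/
def Branching : MTree N → Prop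
  | .leaf _ => True
  | .node ts => ts ≠ [] ∧ ∀ t ∈ ts.attach, Branching t.1
decreasing_by simp only [MTree.node.sizeOf_spec]; have := List.sizeOf_lt_of_mem t.2; omega

/-- A valid mode tree over `[N]`: it has exactly `N` leaves, labeled `{1},...,{N}`
(each index appearing exactly once), and interior nodes have children. -/
def Valid (t : MTree N) : Prop :=
  t.leafList.Nodup ∧ (∀ i : Fin N, i ∈ t.leafList) ∧ t.Branching

/-- The parent of node `ν` in the tree (first argument), if it exists. -/
noncomputable def parentIn : MTree N → MTree N → Option (MTree N)
  | .leaf _, _ => none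
  | .node ts, ν =>
      if ν ∈ ts then some (.node ts)
      else ts.attach.findSome? fun t => parentIn t.1 ν
termination_by T _ => sizeOf T
decreasing_by simp only [MTree.node.sizeOf_spec]; have := List.sizeOf_lt_of_mem t.2; omega

end MTree

open MTree

variable {N : ℕ} (D : Fin N → ℕ)

/-- Full index set of an order-`N` tensor with mode dimensions `D`. -/
abbrev Idx : Type := ∀ n, Fin (D n)

/-- The intermediate tensors `W^(ν,r)` of a hierarchical tensor factorization with
local-component numbers `R` and weight matrices `W` (columns indexed by `ℕ`).
An order-`|label ν|` tensor is represented as a function of a full index tuple that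
only depends on the coordinates in `label ν`; with this representation, the tensor
product of tensors over disjoint mode sets is pointwise multiplication and the mode
permutation `π_ν` is the identity. -/
noncomputable def interm (R : MTree N → ℕ) (W : ∀ ν : MTree N, Fin (R ν) → ℕ → ℝ) :
    MTree N → ℕ → Idx D → ℝ
  | .leaf i, r => fun x =>
      if h : R (.leaf i) = D i then W (.leaf i) (Fin.cast h.symm (x i)) r else 0
  | .node ts, r => fun x =>
      ∑ r' : Fin (R (.node ts)),
        W (.node ts) r' r * (ts.attach.map fun t => interm R W t.1 (r' : ℕ) x).prod
decreasing_by simp only [MTree.node.sizeOf_spec]; have := List.sizeOf_lt_of_mem t.2; omega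

/-- The end tensor `W_H` of the hierarchical tensor factorization with mode tree `T`. -/
noncomputable def endT (R : MTree N → ℕ) (W : ∀ ν : MTree N, Fin (R ν) → ℕ → ℝ)
    (T : MTree N) : Idx D → ℝ :=
  interm D R W T 0

/-- Entry `(i, j)` of the weight matrix at node `ν` (zero outside the row range). -/
noncomputable def went (R : MTree N → ℕ) (W : ∀ ν : MTree N, Fin (R ν) → ℕ → ℝ)
    (ν : MTree N) (i j : ℕ) : ℝ :=
  if h : i < R ν then W ν ⟨i, h⟩ j else 0

/-- `R_{Pa(ν)}` : the number of local components at the parent of `ν` in `T`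
(`1` if `ν` is the root). -/
noncomputable def Rpar (R : MTree N → ℕ) (T ν : MTree N) : ℕ :=
  if ν = T then 1 else ((parentIn T ν).map R).getD 0

/-- Replace the weight matrix at node `μ` by `A`, keeping all other weight matrices. -/
noncomputable def replace (R : MTree N → ℕ) (W : ∀ ν : MTree N, Fin (R ν) → ℕ → ℝ)
    (μ : MTree N) (A : Fin (R μ) → ℕ → ℝ) : ∀ ν : MTree N, Fin (R ν) → ℕ → ℝ :=
  fun ν => if h : ν = μ then fun i j => A (Fin.cast (congrArg R h) i) j else W ν

/-- Frobenius (Euclidean) inner product of order-`N` tensors. -/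
noncomputable def tinner (A B : Idx D → ℝ) : ℝ := ∑ x, A x * B x

/-- Frobenius norm of an order-`N` tensor. -/
noncomputable def tnorm (A : Idx D → ℝ) : ℝ := Real.sqrt (∑ x, (A x) ^ 2)

/-- Frobenius norm of an order-`|s|` tensor represented as a function of a full index
tuple depending only on the coordinates in `s` (so that the sum over the full index
set over-counts each entry `∏_{n ∉ s} D n` times). -/
noncomputable def rnorm (s : Finset (Fin N)) (A : Idx D → ℝ) : ℝ :=
  Real.sqrt ((∑ x, (A x) ^ 2) / ∏ n ∈ sᶜ, (D n : ℝ))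

/-- Squared norm of the `r`'th column of the weight matrix at node `c`. -/
noncomputable def colSq (R : MTree N → ℕ) (W : ∀ ν : MTree N, Fin (R ν) → ℕ → ℝ)
    (c : MTree N) (r : ℕ) : ℝ :=
  ∑ i : Fin (R c), (W c i r) ^ 2

/-- Squared norm of the `r`'th row of the weight matrix at node `ν` of `T`. -/
noncomputable def rowSq (R : MTree N → ℕ) (W : ∀ ν : MTree N, Fin (R ν) → ℕ → ℝ)
    (T ν : MTree N) (r : ℕ) : ℝ :=
  ∑ j : Fin (Rpar R T ν), (went R W ν r (j : ℕ)) ^ 2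

/-- `σ^(ν,r)` : the norm of the `(ν,r)`'th local component, i.e. the product of the
norms of the vectors in `LC(ν,r)` (the `r`'th row of `W^(ν)` together with the `r`'th
columns of the weight matrices of the children of `ν`). -/
noncomputable def sigmaLoc (R : MTree N → ℕ) (W : ∀ ν : MTree N, Fin (R ν) → ℕ → ℝ)
    (T ν : MTree N) (r : ℕ) : ℝ :=
  Real.sqrt (rowSq R W T ν r) * (ν.children.map fun c => Real.sqrt (colSq R W c r)).prod

/-- `PadR_r(W^(ν)_{r,:})` : the matrix whose `r`'th row is the `r`'th row of `W^(ν)`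
and whose other rows are zero. -/
noncomputable def padRow (R : MTree N → ℕ) (W : ∀ ν : MTree N, Fin (R ν) → ℕ → ℝ)
    (ν : MTree N) (r : ℕ) : Fin (R ν) → ℕ → ℝ :=
  fun i j => if (i : ℕ) = r then W ν i j else 0

/-- `PadC_r(W^(c)_{:,r})` : the matrix whose `r`'th column is the `r`'th column of
`W^(c)` and whose other columns are zero. -/
noncomputable def padCol (R : MTree N → ℕ) (W : ∀ ν : MTree N, Fin (R ν) → ℕ → ℝ)
    (c : MTree N) (r : ℕ) : Fin (R c) → ℕ → ℝ :=
  fun i j => if j = r then W c i r else 0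

/-- `Ĉ^(ν,r)` : the end tensor obtained by normalizing the `r`'th local component at
`ν` and setting all other local components at `ν` to zero, i.e. the end tensor computed
with `W^(ν)` replaced by `σ^{-1} · PadR_r(W^(ν)_{r,:})` (and `0` if `σ^(ν,r) = 0`). -/
noncomputable def hatC (R : MTree N → ℕ) (W : ∀ ν : MTree N, Fin (R ν) → ℕ → ℝ)
    (T ν : MTree N) (r : ℕ) : Idx D → ℝ :=
  if sigmaLoc R W T ν r = 0 then 0
  else endT D R (replace R W ν fun i j =>
    if (i : ℕ) = r then (sigmaLoc R W T ν r)⁻¹ * W ν i j else 0) T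

/-- The objective `φ_H = L_H ∘ (end tensor)`. -/
noncomputable def obj (L : (Idx D → ℝ) → ℝ) (R : MTree N → ℕ) (T : MTree N)
    (W : ∀ ν : MTree N, Fin (R ν) → ℕ → ℝ) : ℝ :=
  L (endT D R W T)

/-- Update the single entry `(i, j)` of the weight matrix at node `μ` to the value `s`. -/
noncomputable def upd (R : MTree N → ℕ) (W : ∀ ν : MTree N, Fin (R ν) → ℕ → ℝ)
    (μ : MTree N) (i j : ℕ) (s : ℝ) : ∀ ν : MTree N, Fin (R ν) → ℕ → ℝ :=
  fun ν i' j' => if ν = μ ∧ (i' : ℕ) = i ∧ j' = j then s else W ν i' j'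

/-- `∂φ_H/∂W^(μ)_{i,j}` : the partial derivative of the objective with respect to the
`(i,j)` entry of the weight matrix at node `μ`, at the point `W`. -/
noncomputable def dObj (L : (Idx D → ℝ) → ℝ) (R : MTree N → ℕ) (T : MTree N)
    (W : ∀ ν : MTree N, Fin (R ν) → ℕ → ℝ) (μ : MTree N) (i j : ℕ) : ℝ :=
  deriv (fun s : ℝ => obj D L R T (upd R W μ i j s)) (went R W μ i j)

/-- `∇L(A)` : the gradient of a loss over tensors, entrywise. -/
noncomputable def tgrad (L : (Idx D → ℝ) → ℝ) (A : Idx D → ℝ) : Idx D → ℝ :=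
  fun x => deriv (fun s : ℝ => L (Function.update A x s)) (A x)

/-- Local smoothness of the loss: its gradient is Lipschitz on compact sets. -/
def LocSmooth (L : (Idx D → ℝ) → ℝ) : Prop :=
  ∀ K : Set (Idx D → ℝ), IsCompact K → ∃ β : NNReal, LipschitzOnWith β (tgrad D L) K

/-- Gradient flow over the objective: each entry of each weight matrix moves against
its partial derivative. -/
def GradFlow (L : (Idx D → ℝ) → ℝ) (R : MTree N → ℕ) (T : MTree N)
    (Wt : ℝ → ∀ ν : MTree N, Fin (R ν) → ℕ → ℝ) : Prop :=
  ∀ (ν : MTree N) (i : Fin (R ν)) (j : ℕ) (t : ℝ), 0 ≤ t →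
    HasDerivAt (fun s : ℝ => Wt s ν i j) (- dObj D L R T (Wt t) ν (i : ℕ) j) t

/-- The matricization of an order-`N` tensor according to the index set `I` : the
matrix whose rows are indexed by the modes in `I` and whose columns are indexed by the
remaining modes. -/
noncomputable def matricize (I : Finset (Fin N)) (A : Idx D → ℝ) :
    Matrix (∀ i : {n // n ∈ I}, Fin (D i)) (∀ j : {n // n ∉ I}, Fin (D j)) ℝ :=
  fun ρ κ => A fun n => if h : n ∈ I then ρ ⟨n, h⟩ else κ ⟨n, h⟩

/-- Frobenius norm of the weight matrix `W^(ν) ∈ ℝ^{R_ν × R_{Pa(ν)}}` at node `ν` of `T`. -/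
noncomputable def wFro (R : MTree N → ℕ) (W : ∀ ν : MTree N, Fin (R ν) → ℕ → ℝ)
    (T ν : MTree N) : ℝ :=
  Real.sqrt (∑ i : Fin (R ν), ∑ j : Fin (Rpar R T ν), (W ν i (j : ℕ)) ^ 2)

/-- The weights obtained by pruning the `(ν,r)`'th local component: the `r`'th row of
`W^(ν)` and the `r`'th column of `W^(c)` for every child `c` of `ν` are set to zero. -/
noncomputable def pruneLC (R : MTree N → ℕ) (W : ∀ ν : MTree N, Fin (R ν) → ℕ → ℝ)
    (ν : MTree N) (r : ℕ) : ∀ μ : MTree N, Fin (R μ) → ℕ → ℝ :=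
  fun μ i j =>
    if μ = ν ∧ (i : ℕ) = r then 0
    else if μ ∈ ν.children ∧ j = r then 0
    else W μ i j

end HTF

/-! The end tensor depends on the weights in the subtree of `ν` only through the intermediate
tensors `W^(ν,j)`, `j < R_{Pa(ν)}`, and it is linear in each of them, because `ν` occurs in
exactly one factor of each tensor product above it (the leaves are distinct). Both padded
substitutions collapse `W^(ν,j)` to the single summand `W^(ν)_{r,j} · ⊗_c W^(c,r)`, which is
`σ^(ν,r)` times the corresponding summand for the normalized component; when `σ^(ν,r) = 0`, the
row `W^(ν)_{r,:}` or a column `W^(c)_{:,r}` vanishes, and so does that summand. -/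

theorem List.findSome?_eq_some_of_forall {α β : Type*} {f : α → Option β} {b : β} {l : List α}
    (hall : ∀ x ∈ l, f x = none ∨ f x = some b) (hex : ∃ x ∈ l, f x = some b) :
    l.findSome? f = some b := by
  obtain ⟨x, hx, hfx⟩ := hex
  cases hfind : l.findSome? f with
  | none => rw [List.findSome?_eq_none_iff.1 hfind x hx] at hfx; cases hfx
  | some b' =>
    obtain ⟨y, hy, hfy⟩ := List.exists_of_findSome?_eq_some hfind
    rcases hall y hy with h | h
    · simp [h] at hfy
    · rw [← hfy, h]

namespace HTF

variable {N : ℕ}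

namespace MTree

theorem sizeOf_lt_of_mem {t : MTree N} {ts : List (MTree N)} (h : t ∈ ts) :
    sizeOf t < sizeOf (node ts) := by
  have := List.sizeOf_lt_of_mem h
  simp only [node.sizeOf_spec]
  omega

theorem mem_nodes_leaf {i : Fin N} {a : MTree N} : a ∈ (leaf i).nodes ↔ a = leaf i := by
  simp [nodes]

theorem mem_nodes_node {ts : List (MTree N)} {a : MTree N} :
    a ∈ (node ts).nodes ↔ a = node ts ∨ ∃ t ∈ ts, a ∈ t.nodes := by
  rw [nodes]; simp

theorem leafList_node (ts : List (MTree N)) : (node ts).leafList = ts.flatMap leafList := by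
  rw [leafList]; simp

theorem branching_node {ts : List (MTree N)} :
    (node ts).Branching ↔ ts ≠ [] ∧ ∀ t ∈ ts, t.Branching := by
  rw [Branching]; simp

theorem mem_nodes_self (t : MTree N) : t ∈ t.nodes := by
  cases t <;> simp [mem_nodes_leaf, mem_nodes_node]

theorem mem_nodes_of_mem_children {t c : MTree N} (h : c ∈ t.children) : c ∈ t.nodes := by
  cases t with
  | leaf i => simp [children] at h
  | node ts => exact mem_nodes_node.2 (Or.inr ⟨c, h, mem_nodes_self c⟩)

theorem sizeOf_le_of_mem_nodes {t a : MTree N} (h : a ∈ t.nodes) : sizeOf a ≤ sizeOf t := by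
  induction t using nodes.induct generalizing a with
  | case1 i => rw [mem_nodes_leaf.1 h]
  | case2 ts ih =>
    obtain rfl | ⟨t, ht, h⟩ := mem_nodes_node.1 h
    · rfl
    · exact (ih ⟨t, ht⟩ h).trans (sizeOf_lt_of_mem ht).le

theorem mem_nodes_trans {t a b : MTree N} (hab : a ∈ b.nodes) (hb : b ∈ t.nodes) :
    a ∈ t.nodes := by
  induction t using nodes.induct generalizing b with
  | case1 i => rwa [mem_nodes_leaf.1 hb] at hab
  | case2 ts ih =>
    obtain rfl | ⟨t, ht, h⟩ := mem_nodes_node.1 hb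
    · exact hab
    · exact mem_nodes_node.2 (Or.inr ⟨t, ht, ih ⟨t, ht⟩ hab h⟩)

theorem sizeOf_lt_of_mem_children {t c : MTree N} (h : c ∈ t.children) :
    sizeOf c < sizeOf t := by
  cases t with
  | leaf i => simp [children] at h
  | node ts => exact sizeOf_lt_of_mem h

theorem not_mem_nodes_of_mem_children {t c : MTree N} (h : c ∈ t.children) :
    t ∉ c.nodes := fun h' =>
  (sizeOf_le_of_mem_nodes h').not_gt (sizeOf_lt_of_mem_children h)

theorem Branching.of_mem_nodes {t a : MTree N} (hB : t.Branching) (h : a ∈ t.nodes) :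
    a.Branching := by
  induction t using nodes.induct generalizing a with
  | case1 i => rw [mem_nodes_leaf.1 h]; trivial
  | case2 ts ih =>
    obtain rfl | ⟨t, ht, h⟩ := mem_nodes_node.1 h
    · exact hB
    · exact ih ⟨t, ht⟩ ((branching_node.1 hB).2 t ht) h

theorem Branching.leafList_ne_nil {t : MTree N} (hB : t.Branching) : t.leafList ≠ [] := by
  induction t using nodes.induct with
  | case1 i => simp [leafList]
  | case2 ts ih =>
    obtain ⟨hne, hts⟩ := branching_node.1 hB
    obtain ⟨t, ht⟩ := List.exists_mem_of_ne_nil _ hne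
    obtain ⟨ℓ, hℓ⟩ := List.exists_mem_of_ne_nil _ (ih ⟨t, ht⟩ (hts t ht))
    rw [leafList_node]
    exact List.ne_nil_of_mem (List.mem_flatMap.2 ⟨t, ht, hℓ⟩)

theorem leafList_sublist_of_mem_nodes {t a : MTree N} (h : a ∈ t.nodes) :
    a.leafList.Sublist t.leafList := by
  induction t using nodes.induct generalizing a with
  | case1 i => rw [mem_nodes_leaf.1 h]
  | case2 ts ih =>
    obtain rfl | ⟨t, ht, h⟩ := mem_nodes_node.1 h
    · rfl
    · rw [leafList_node, List.flatMap]
      exact (ih ⟨t, ht⟩ h).trans (List.sublist_flatten_of_mem (List.mem_map_of_mem ht))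

theorem eq_of_mem_nodes_of_mem_children {ts : List (MTree N)} (hB : (node ts).Branching)
    (hnd : (node ts).leafList.Nodup) {a t₁ t₂ : MTree N} (h₁ : t₁ ∈ ts) (h₂ : t₂ ∈ ts)
    (ha₁ : a ∈ t₁.nodes) (ha₂ : a ∈ t₂.nodes) : t₁ = t₂ := by
  by_contra hne
  have hBa := ((branching_node.1 hB).2 t₁ h₁).of_mem_nodes ha₁
  obtain ⟨ℓ, hℓ⟩ := List.exists_mem_of_ne_nil _ hBa.leafList_ne_nil
  rw [leafList_node, List.nodup_flatMap] at hnd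
  have : Std.Symm (Function.onFun List.Disjoint (leafList (N := N))) := ⟨fun _ _ h => h.symm⟩
  exact hnd.2.forall h₁ h₂ hne ((leafList_sublist_of_mem_nodes ha₁).subset hℓ)
    ((leafList_sublist_of_mem_nodes ha₂).subset hℓ)

theorem nodup_of_leafList_nodup {ts : List (MTree N)} (hB : (node ts).Branching)
    (hnd : (node ts).leafList.Nodup) : ts.Nodup := by
  rw [leafList_node, List.nodup_flatMap] at hnd
  refine hnd.2.imp_of_mem fun {a b} ha _ hab hne => ?_
  obtain ⟨ℓ, hℓ⟩ := List.exists_mem_of_ne_nil _ ((branching_node.1 hB).2 a ha).leafList_ne_nil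
  exact hab hℓ (hne ▸ hℓ)

theorem parentIn_eq_none {t ν : MTree N} (h : ν ∉ t.nodes) : parentIn t ν = none := by
  induction t using nodes.induct with
  | case1 i => rw [parentIn]
  | case2 ts ih =>
    have hνts : ν ∉ ts := fun hν => h (mem_nodes_of_mem_children (t := node ts) hν)
    rw [parentIn, if_neg hνts]
    exact List.findSome?_eq_none_iff.2 fun t _ =>
      ih t fun hν => h (mem_nodes_trans hν (mem_nodes_of_mem_children (t := node ts) t.2))

theorem parentIn_eq_some {t p ν : MTree N} (hB : t.Branching) (hnd : t.leafList.Nodup)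
    (hp : p ∈ t.nodes) (hν : ν ∈ p.children) : parentIn t ν = some p := by
  induction t using nodes.induct generalizing p with
  | case1 i => rw [mem_nodes_leaf.1 hp] at hν; simp [children] at hν
  | case2 ts ih =>
    obtain rfl | ⟨t₀, ht₀, hpt₀⟩ := mem_nodes_node.1 hp
    · rw [parentIn, if_pos (show ν ∈ ts from hν)]
    have hνt₀ : ν ∈ t₀.nodes := mem_nodes_trans (mem_nodes_of_mem_children hν) hpt₀
    have hνts : ν ∉ ts := fun hνts => by
      obtain rfl := eq_of_mem_nodes_of_mem_children hB hnd hνts ht₀ (mem_nodes_self ν) hνt₀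
      exact not_mem_nodes_of_mem_children hν hpt₀
    rw [parentIn, if_neg hνts]
    have hsub : ∀ t ∈ ts, t.Branching ∧ t.leafList.Nodup := fun t ht =>
      ⟨(branching_node.1 hB).2 t ht,
        (leafList_sublist_of_mem_nodes (mem_nodes_of_mem_children (t := node ts) ht)).nodup hnd⟩
    refine List.findSome?_eq_some_of_forall (fun t _ => ?_)
      ⟨⟨t₀, ht₀⟩, List.mem_attach _ _, ih _ (hsub t₀ ht₀).1 (hsub t₀ ht₀).2 hpt₀ hν⟩
    by_cases hνt : ν ∈ t.1.nodes
    · obtain rfl : t = ⟨t₀, ht₀⟩ :=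
        Subtype.ext (eq_of_mem_nodes_of_mem_children hB hnd t.2 ht₀ hνt hνt₀)
      exact Or.inr (ih _ (hsub t₀ ht₀).1 (hsub t₀ ht₀).2 hpt₀ hν)
    · exact Or.inl (parentIn_eq_none hνt)

end MTree

open MTree

theorem Rpar_eq {R : MTree N → ℕ} {T p ν : MTree N} (hB : T.Branching)
    (hnd : T.leafList.Nodup) (hp : p ∈ T.nodes) (hν : ν ∈ p.children) : Rpar R T ν = R p := by
  have hνT : ν ≠ T := by
    rintro rfl
    exact not_mem_nodes_of_mem_children hν hp
  rw [Rpar, if_neg hνT, parentIn_eq_some hB hnd hp hν]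
  rfl

variable (D : Fin N → ℕ) {R : MTree N → ℕ}

theorem interm_leaf (W : ∀ ν : MTree N, Fin (R ν) → ℕ → ℝ) (i : Fin N) (j : ℕ) :
    interm D R W (leaf i) j = fun x =>
      if h : R (leaf i) = D i then W (leaf i) (Fin.cast h.symm (x i)) j else 0 := by
  rw [interm]

theorem interm_node (W : ∀ ν : MTree N, Fin (R ν) → ℕ → ℝ) (ts : List (MTree N)) (j : ℕ) :
    interm D R W (node ts) j = fun x =>
      ∑ r : Fin (R (node ts)), W (node ts) r j * (ts.map fun t => interm D R W t r x).prod := by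
  rw [interm]
  simp only [List.map_attach_eq_pmap, List.pmap_eq_map]

theorem interm_congr {W₁ W₂ : ∀ ν : MTree N, Fin (R ν) → ℕ → ℝ} {μ : MTree N}
    (h : ∀ μ' ∈ μ.nodes, W₁ μ' = W₂ μ') : interm D R W₁ μ = interm D R W₂ μ := by
  induction μ using nodes.induct with
  | case1 i => funext j; simp only [interm_leaf, h _ (mem_nodes_self _)]
  | case2 ts ih =>
    funext j x
    simp only [interm_node, h _ (mem_nodes_self _)]
    refine Finset.sum_congr rfl fun r _ => congrArg _ (congrArg List.prod
      (List.map_congr_left fun t ht => ?_))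
    rw [ih ⟨t, ht⟩ fun μ' hμ' =>
      h μ' (mem_nodes_trans hμ' (mem_nodes_of_mem_children (t := node ts) ht))]

section Replace

variable {W : ∀ ν : MTree N, Fin (R ν) → ℕ → ℝ} {μ : MTree N} {A : Fin (R μ) → ℕ → ℝ}

theorem replace_self : replace R W μ A μ = A := by
  funext i j
  simp [replace]

theorem replace_of_ne {ν : MTree N} (h : ν ≠ μ) : replace R W μ A ν = W ν :=
  dif_neg h

theorem replace_of_not_mem_nodes {ν : MTree N} (h : ν ∉ μ.nodes) : replace R W μ A ν = W ν :=
  replace_of_ne fun he => h (he ▸ mem_nodes_self μ)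

theorem interm_replace_of_not_mem_nodes {t : MTree N} (h : μ ∉ t.nodes) :
    interm D R (replace R W μ A) t = interm D R W t :=
  interm_congr D fun _ hμ' => replace_of_ne fun he => h (he ▸ hμ')

theorem interm_replace_node {ts : List (MTree N)} (A : Fin (R (node ts)) → ℕ → ℝ) (j : ℕ) :
    interm D R (replace R W (node ts) A) (node ts) j = fun x =>
      ∑ r : Fin (R (node ts)), A r j * (ts.map fun t => interm D R W t r x).prod := by
  rw [interm_node, replace_self]
  funext x
  refine Finset.sum_congr rfl fun r _ => congrArg _ (congrArg List.prod
    (List.map_congr_left fun t ht => ?_))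
  rw [interm_replace_of_not_mem_nodes D (not_mem_nodes_of_mem_children (t := node ts) ht)]

theorem interm_replace_smul (a : ℝ) (j : ℕ) :
    interm D R (replace R W μ (a • A)) μ j = a • interm D R (replace R W μ A) μ j := by
  funext x
  cases μ with
  | leaf i => simp only [interm_leaf, replace_self]; split_ifs <;> simp
  | node ts => simp [interm_replace_node, Finset.mul_sum, mul_assoc]

theorem interm_eq_zero_of_col_eq_zero {j : ℕ} (h : ∀ i, W μ i j = 0) :
    interm D R W μ j = 0 := by
  funext x
  cases μ with
  | leaf i => simp [interm_leaf, h]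
  | node ts => simp [interm_node, h]

theorem interm_replace_of_col_eq {j : ℕ} (h : ∀ i, A i j = W μ i j) :
    interm D R (replace R W μ A) μ j = interm D R W μ j := by
  cases μ with
  | leaf i => simp [interm_leaf, replace_self, h]
  | node ts => rw [interm_replace_node, interm_node]; simp only [h]

end Replace

section Locality

variable {W₁ W₂ : ∀ ν : MTree N, Fin (R ν) → ℕ → ℝ} {T ν : MTree N}

theorem interm_eq_smul_of_interm_eq_smul (hB : T.Branching) (hnd : T.leafList.Nodup) (a : ℝ)
    (hW : ∀ μ ∉ ν.nodes, W₁ μ = W₂ μ)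
    (hν : ∀ j < Rpar R T ν, interm D R W₁ ν j = a • interm D R W₂ ν j)
    {μ : MTree N} (hμ : μ ∈ T.nodes) (hνμ : ν ∈ μ.nodes) {j : ℕ}
    (hj : μ = ν → j < Rpar R T ν) :
    interm D R W₁ μ j = a • interm D R W₂ μ j := by
  induction μ using nodes.induct generalizing j with
  | case1 i => obtain rfl := mem_nodes_leaf.1 hνμ; exact hν j (hj rfl)
  | case2 ts ih =>
    obtain rfl | ⟨t₀, ht₀, hνt₀⟩ := mem_nodes_node.1 hνμ
    · exact hν j (hj rfl)
    have hBμ := hB.of_mem_nodes hμ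
    have hndμ := (leafList_sublist_of_mem_nodes hμ).nodup hnd
    have hWμ : W₁ (node ts) = W₂ (node ts) := hW _ fun h =>
      not_mem_nodes_of_mem_children (t := node ts) ht₀ (mem_nodes_trans h hνt₀)
    funext x
    simp only [interm_node, hWμ, Pi.smul_apply, smul_eq_mul, Finset.mul_sum]
    refine Finset.sum_congr rfl fun r _ => ?_
    have hr : t₀ = ν → (r : ℕ) < Rpar R T ν := by
      rintro rfl
      rw [Rpar_eq hB hnd hμ ht₀]
      exact r.isLt
    have h₀ := congrFun (ih ⟨t₀, ht₀⟩ (mem_nodes_trans (mem_nodes_of_mem_children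
      (t := node ts) ht₀) hμ) hνt₀ hr) x
    have hothers : ∀ t ∈ ts.erase t₀, interm D R W₁ t r x = interm D R W₂ t r x := by
      intro t ht
      obtain ⟨hne, ht⟩ := (nodup_of_leafList_nodup hBμ hndμ).mem_erase_iff.1 ht
      refine congrFun (congrFun (interm_congr D fun μ' hμ' => hW μ' fun h => hne ?_) r) x
      exact eq_of_mem_nodes_of_mem_children hBμ hndμ ht ht₀ hμ' (mem_nodes_trans h hνt₀)
    rw [← List.prod_map_erase _ ht₀, ← List.prod_map_erase _ ht₀, h₀,
      List.map_congr_left hothers, Pi.smul_apply, smul_eq_mul]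
    ring

theorem endT_eq_smul_of_interm_eq_smul (hB : T.Branching) (hnd : T.leafList.Nodup)
    (hνT : ν ∈ T.nodes) (a : ℝ) (hW : ∀ μ ∉ ν.nodes, W₁ μ = W₂ μ)
    (hν : ∀ j < Rpar R T ν, interm D R W₁ ν j = a • interm D R W₂ ν j) :
    endT D R W₁ T = a • endT D R W₂ T :=
  interm_eq_smul_of_interm_eq_smul D hB hnd a hW hν (mem_nodes_self T) hνT fun h => by
    rw [Rpar, if_pos h.symm]
    exact one_pos

end Locality

theorem endT_replace_smul {W : ∀ ν : MTree N, Fin (R ν) → ℕ → ℝ} {T μ : MTree N}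
    (hB : T.Branching) (hnd : T.leafList.Nodup) (hμ : μ ∈ T.nodes) (a : ℝ)
    (A : Fin (R μ) → ℕ → ℝ) :
    endT D R (replace R W μ (a • A)) T = a • endT D R (replace R W μ A) T :=
  endT_eq_smul_of_interm_eq_smul D hB hnd hμ a
    (fun _ h => by rw [replace_of_not_mem_nodes h, replace_of_not_mem_nodes h])
    fun j _ => interm_replace_smul D a j

section LocalComponent

variable {W : ∀ ν : MTree N, Fin (R ν) → ℕ → ℝ} {T : MTree N}

theorem colSq_eq_zero_iff {c : MTree N} {r : ℕ} : colSq R W c r = 0 ↔ ∀ i, W c i r = 0 := by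
  simp [colSq, Finset.sum_eq_zero_iff_of_nonneg, sq_nonneg]

theorem rowSq_eq_zero_iff {ν : MTree N} {r : ℕ} :
    rowSq R W T ν r = 0 ↔ ∀ j : Fin (Rpar R T ν), went R W ν r j = 0 := by
  simp [rowSq, Finset.sum_eq_zero_iff_of_nonneg, sq_nonneg]

theorem sigmaLoc_eq_zero_iff {ν : MTree N} {r : ℕ} :
    sigmaLoc R W T ν r = 0 ↔ rowSq R W T ν r = 0 ∨ ∃ c ∈ ν.children, colSq R W c r = 0 := by
  have hrow : 0 ≤ rowSq R W T ν r := Finset.sum_nonneg fun _ _ => sq_nonneg _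
  have hcol : ∀ c, 0 ≤ colSq R W c r := fun _ => Finset.sum_nonneg fun _ _ => sq_nonneg _
  simp [sigmaLoc, Real.sqrt_eq_zero hrow, Real.sqrt_eq_zero (hcol _)]

theorem interm_replace_padRow {ts : List (MTree N)} (r : Fin (R (node ts))) (j : ℕ) :
    interm D R (replace R W (node ts) (padRow R W (node ts) r)) (node ts) j =
      fun x => W (node ts) r j * (ts.map fun t => interm D R W t r x).prod := by
  rw [interm_replace_node]
  funext x
  simp [padRow, Fin.val_inj]

theorem interm_replace_padCol {ts : List (MTree N)} (hB : (node ts).Branching)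
    (hnd : (node ts).leafList.Nodup) {c : MTree N} (hc : c ∈ ts) (r : Fin (R (node ts)))
    (j : ℕ) :
    interm D R (replace R W c (padCol R W c r)) (node ts) j =
      fun x => W (node ts) r j * (ts.map fun t => interm D R W t r x).prod := by
  have hcν : node ts ≠ c := fun h =>
    not_mem_nodes_of_mem_children (t := node ts) hc (h ▸ mem_nodes_self _)
  have hprod : ∀ (r' : Fin (R (node ts))) x,
      (ts.map fun t => interm D R (replace R W c (padCol R W c r)) t r' x).prod =
        if r' = r then (ts.map fun t => interm D R W t r' x).prod else 0 := by
    intro r' x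
    split_ifs with hr'
    · subst hr'
      refine congrArg List.prod (List.map_congr_left fun t ht => ?_)
      obtain rfl | htc := eq_or_ne t c
      · rw [interm_replace_of_col_eq D fun i => by simp [padCol]]
      · rw [interm_replace_of_not_mem_nodes D fun h =>
          htc (eq_of_mem_nodes_of_mem_children hB hnd ht hc h (mem_nodes_self c))]
    · refine List.prod_eq_zero (List.mem_map.2 ⟨c, hc, ?_⟩)
      rw [interm_eq_zero_of_col_eq_zero D fun i => by
        simp [replace_self, padCol, Fin.val_inj, hr']]
      rfl
  rw [interm_node, replace_of_ne hcν]
  funext x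
  simp [hprod]

end LocalComponent

section EndTensor

variable {W : ∀ ν : MTree N, Fin (R ν) → ℕ → ℝ} {T : MTree N} {ts : List (MTree N)}

theorem endT_replace_padRow_of_sigmaLoc_eq_zero (hB : T.Branching) (hnd : T.leafList.Nodup)
    (hνT : node ts ∈ T.nodes) (r : Fin (R (node ts))) (hσ : sigmaLoc R W T (node ts) r = 0) :
    endT D R (replace R W (node ts) (padRow R W (node ts) r)) T = 0 := by
  suffices h : ∀ j < Rpar R T (node ts),
      interm D R (replace R W (node ts) (padRow R W (node ts) r)) (node ts) j = 0 by
    simpa using endT_eq_smul_of_interm_eq_smul D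
      (W₂ := replace R W (node ts) (padRow R W (node ts) r)) hB hnd hνT 0
      (fun _ _ => rfl) fun j hj => by rw [h j hj, zero_smul]
  intro j hj
  rw [interm_replace_padRow]
  funext x
  rcases sigmaLoc_eq_zero_iff.1 hσ with hrow | ⟨c, hc, hcol⟩
  · have hW : went R W (node ts) r j = 0 := rowSq_eq_zero_iff.1 hrow ⟨j, hj⟩
    simp only [went, Fin.is_lt, dif_pos] at hW
    simp [hW]
  · have hc0 : interm D R W c r x = 0 :=
      congrFun (interm_eq_zero_of_col_eq_zero D (colSq_eq_zero_iff.1 hcol)) x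
    rw [List.prod_eq_zero (List.mem_map.2 ⟨c, show c ∈ ts from hc, hc0⟩), mul_zero]
    rfl

theorem endT_replace_padRow (hB : T.Branching) (hnd : T.leafList.Nodup)
    (hνT : node ts ∈ T.nodes) (r : Fin (R (node ts))) :
    endT D R (replace R W (node ts) (padRow R W (node ts) r)) T =
      sigmaLoc R W T (node ts) r • hatC D R W T (node ts) r := by
  set σ := sigmaLoc R W T (node ts) r
  by_cases hσ : σ = 0
  · rw [endT_replace_padRow_of_sigmaLoc_eq_zero D hB hnd hνT r hσ, hσ, zero_smul]
  have hA : (fun (i : Fin (R (node ts))) j =>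
      if (i : ℕ) = r then σ⁻¹ * W (node ts) i j else 0) = σ⁻¹ • padRow R W (node ts) r := by
    funext i j
    simp [padRow]
  rw [hatC, if_neg hσ, hA, endT_replace_smul D hB hnd hνT, smul_smul, mul_inv_cancel₀ hσ,
    one_smul]

theorem endT_replace_padCol (hB : T.Branching) (hnd : T.leafList.Nodup)
    (hνT : node ts ∈ T.nodes) {c : MTree N} (hc : c ∈ ts) (r : Fin (R (node ts))) :
    endT D R (replace R W c (padCol R W c r)) T =
      endT D R (replace R W (node ts) (padRow R W (node ts) r)) T := by
  have hBν := hB.of_mem_nodes hνT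
  have hndν := (leafList_sublist_of_mem_nodes hνT).nodup hnd
  refine (endT_eq_smul_of_interm_eq_smul D hB hnd hνT 1 (fun μ hμ => ?_) fun j _ => ?_).trans
    (one_smul _ _)
  · have hμc : μ ∉ c.nodes := fun h =>
      hμ (mem_nodes_trans h (mem_nodes_of_mem_children (t := node ts) hc))
    rw [replace_of_not_mem_nodes hμc, replace_of_not_mem_nodes hμ]
  · rw [one_smul, interm_replace_padCol D hBν hndν hc, interm_replace_padRow]

end EndTensor

end HTF

open HTF HTF.MTree in
theorem statement7_general {N : ℕ} (D : Fin N → ℕ) (T : MTree N) (hT : T.Valid)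
    (R : MTree N → ℕ)
    (W : ∀ ν : MTree N, Fin (R ν) → ℕ → ℝ)
    (ν : MTree N) (hν : ν ∈ T.nodes)
    (c : MTree N) (hc : c ∈ ν.children) (r : Fin (R ν)) :
    (endT D R (replace R W ν (padRow R W ν (r : ℕ))) T
      = fun x => sigmaLoc R W T ν (r : ℕ) * hatC D R W T ν (r : ℕ) x) ∧
    (endT D R (replace R W c (padCol R W c (r : ℕ))) T
      = fun x => sigmaLoc R W T ν (r : ℕ) * hatC D R W T ν (r : ℕ) x) := by
  obtain ⟨hnd, -, hB⟩ := hT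
  cases ν with
  | leaf i => simp [children] at hc
  | node ts =>
    have hrow := endT_replace_padRow D (W := W) hB hnd hν r
    exact ⟨hrow, (endT_replace_padCol D hB hnd hν hc r).trans hrow⟩

open HTF HTF.MTree in
/-- for an interior node `ν`, a child `c` of `ν`, and `r ∈ [R_ν]`, the
end tensor obtained by substituting `PadR_r(W^(ν)_{r,:})` for `W^(ν)` equals
`σ^(ν,r) · Ĉ^(ν,r)`, and the end tensor obtained by substituting `PadC_r(W^(c)_{:,r})`
for `W^(c)` also equals `σ^(ν,r) · Ĉ^(ν,r)`. -/
theorem statement7 {N : ℕ} (D : Fin N → ℕ) (T : MTree N) (hT : T.Valid)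
    (R : MTree N → ℕ) (hR : ∀ i : Fin N, R (MTree.leaf i) = D i)
    (W : ∀ ν : MTree N, Fin (R ν) → ℕ → ℝ)
    (ν : MTree N) (hν : ν ∈ T.nodes) (hint : ν.IsInterior)
    (c : MTree N) (hc : c ∈ ν.children) (r : Fin (R ν)) :
    (endT D R (replace R W ν (padRow R W ν (r : ℕ))) T
      = fun x => sigmaLoc R W T ν (r : ℕ) * hatC D R W T ν (r : ℕ) x) ∧
    (endT D R (replace R W c (padCol R W c (r : ℕ))) T
      = fun x => sigmaLoc R W T ν (r : ℕ) * hatC D R W T ν (r : ℕ) x) :=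
  statement7_general D T hT R W ν hν c hc r
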